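/- (Corollary of Borisov's theorem) There is no set G of functions from ℝ⁴ to ℝ⁴ that forms a group under composition and satisfies Triv↑ ⊊ G ⊊ Poi↑. -/

import Mathlib

/-- Spacetime points: elements of ℝ⁴. -/
abbrev Pt : Type := Fin 4 → ℝ

/-- Lightlike relatedness λ. -/
def lightlike (p q : Pt) : Prop :=
  (p 0 - q 0) ^ 2 = (p 1 - q 1) ^ 2 + (p 2 - q 2) ^ 2 + (p 3 - q 3) ^ 2

/-- Absolute simultaneity S. -/
def simul (p q : Pt) : Prop := p 0 = q 0

/-- Squared Minkowski length. -/
def sqMink (p : Pt) : ℝ := p 0 ^ 2 - p 1 ^ 2 - p 2 ^ 2 - p 3 ^ 2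

/-- Squared Euclidean length. -/
def sqEucl (p : Pt) : ℝ := p 0 ^ 2 + p 1 ^ 2 + p 2 ^ 2 + p 3 ^ 2

/-- Translations of ℝ⁴. -/
def IsTranslation (τ : Pt → Pt) : Prop := ∃ b : Pt, ∀ p, τ p = p + b

/-- Lorentz transformations: bijective linear maps preserving squared Minkowski length. -/
def IsLorentz (L : Pt → Pt) : Prop :=
  IsLinearMap ℝ L ∧ Function.Bijective L ∧ ∀ p, sqMink (L p) = sqMink p

/-- Poincaré transformations: translations composed with Lorentz transformations. -/
def IsPoincare (P : Pt → Pt) : Prop :=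
  ∃ τ L, IsTranslation τ ∧ IsLorentz L ∧ P = τ ∘ L

/-- Euclidean isometries: translations composed with bijective linear maps preserving
squared Euclidean length. -/
def IsEuclIsom (A : Pt → Pt) : Prop :=
  ∃ τ L, IsTranslation τ ∧ IsLinearMap ℝ L ∧ Function.Bijective L ∧
    (∀ p, sqEucl (L p) = sqEucl p) ∧ A = τ ∘ L

/-- Vertical lines: lines parallel to the time axis. -/
def IsVerticalLine (ℓ : Set Pt) : Prop :=
  ∃ q : Pt, ℓ = {p | p 1 = q 1 ∧ p 2 = q 2 ∧ p 3 = q 3}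

/-- Trivial transformations: Euclidean isometries taking vertical lines to vertical lines. -/
def IsTrivial (A : Pt → Pt) : Prop :=
  IsEuclIsom A ∧ ∀ ℓ, IsVerticalLine ℓ → IsVerticalLine (A '' ℓ)

/-- Scalings: maps `p ↦ a • p` with `a ≠ 0`. -/
def IsScaling (D : Pt → Pt) : Prop := ∃ a : ℝ, a ≠ 0 ∧ ∀ p, D p = a • p

/-- The point (1,0,0,0). -/
def unitTime : Pt := fun i => if i = 0 then 1 else 0

/-- Orthochronous maps: maps not changing the direction of time. -/
def Orthochronous (A : Pt → Pt) : Prop := A unitTime 0 > A 0 0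

/-- The set of Poincaré transformations. -/
def Poi : Set (Pt → Pt) := {P | IsPoincare P}

/-- The set of orthochronous Poincaré transformations. -/
def PoiUp : Set (Pt → Pt) := {P | IsPoincare P ∧ Orthochronous P}

/-- The set of trivial transformations. -/
def Triv : Set (Pt → Pt) := {T | IsTrivial T}

/-- The set of orthochronous trivial transformations. -/
def TrivUp : Set (Pt → Pt) := {T | IsTrivial T ∧ Orthochronous T}

/-- The set of scalings. -/
def Scal : Set (Pt → Pt) := {D | IsScaling D}

/-- Composition of two sets of functions: `H ∘ G = {h ∘ g : h ∈ H, g ∈ G}`. -/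
def setComp (H G : Set (Pt → Pt)) : Set (Pt → Pt) := {f | ∃ h ∈ H, ∃ g ∈ G, f = h ∘ g}

/-- A set of functions forms a group under composition. -/
def IsCompGroup (G : Set (Pt → Pt)) : Prop :=
  id ∈ G ∧ (∀ f ∈ G, ∀ g ∈ G, f ∘ g ∈ G) ∧
    ∀ f ∈ G, ∃ g ∈ G, f ∘ g = id ∧ g ∘ f = id

/-!
Write an orthochronous Lorentz map `L` as `boost (L e) ∘ R`, where `e = unitTime` and `R` fixes `e`;
such `R`, like all translations, are trivial. So a group `G ⊇ Triv↑` is all of `Poi↑` as soon as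
it contains every boost, and whether it contains `boost x` depends only on the Lorentz factor
`x 0`, because conjugating by a spatial reflection turns the direction of a boost. Composing two
boosts of factor `γ` in suitable directions gives every factor in `[1, 2γ² - 1]`, so one boost with
`γ > 1`, extracted from any non-trivial element of `G`, yields boosts of every factor.
-/

def sdot (p q : Pt) : ℝ := p 1 * q 1 + p 2 * q 2 + p 3 * q 3

lemma sdot_unitTime (p : Pt) : sdot p unitTime = 0 := by
  simp [sdot, unitTime]

lemma sqMink_eq (p : Pt) : sqMink p = p 0 ^ 2 - sdot p p := by
  simp only [sqMink, sdot]; ring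

lemma sqEucl_eq (p : Pt) : sqEucl p = p 0 ^ 2 + sdot p p := by
  simp only [sqEucl, sdot]; ring

lemma sdot_self_nonneg (p : Pt) : 0 ≤ sdot p p :=
  add_nonneg (add_nonneg (mul_self_nonneg _) (mul_self_nonneg _)) (mul_self_nonneg _)

lemma sdot_self_eq_zero {p : Pt} (h : sdot p p = 0) : p = p 0 • unitTime := by
  simp only [sdot] at h
  have h1 : p 1 = 0 := by nlinarith [sq_nonneg (p 1), sq_nonneg (p 2), sq_nonneg (p 3)]
  have h2 : p 2 = 0 := by nlinarith [sq_nonneg (p 1), sq_nonneg (p 2), sq_nonneg (p 3)]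
  have h3 : p 3 = 0 := by nlinarith [sq_nonneg (p 1), sq_nonneg (p 2), sq_nonneg (p 3)]
  funext i
  fin_cases i <;> simp [unitTime, h1, h2, h3]

lemma sqMink_unitTime : sqMink unitTime = 1 := by
  simp [sqMink, unitTime]

def mdot (p q : Pt) : ℝ := p 0 * q 0 - sdot p q

lemma mdot_eq_polarization (p q : Pt) :
    mdot p q = (sqMink (p + q) - sqMink p - sqMink q) / 2 := by
  simp only [mdot, sqMink, sdot, Pi.add_apply]; ring

lemma mdot_unitTime (p : Pt) : mdot p unitTime = p 0 := by
  simp [mdot, sdot_unitTime, unitTime]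

namespace IsLorentz

variable {L M : Pt → Pt}

lemma comp (hL : IsLorentz L) (hM : IsLorentz M) : IsLorentz (L ∘ M) :=
  ⟨((IsLinearMap.mk' L hL.1).comp (IsLinearMap.mk' M hM.1)).isLinear, hL.2.1.comp hM.2.1,
    fun p => (hL.2.2 _).trans (hM.2.2 p)⟩

lemma mdot_map (hL : IsLorentz L) (p q : Pt) : mdot (L p) (L q) = mdot p q := by
  rw [mdot_eq_polarization, mdot_eq_polarization, ← hL.1.map_add, hL.2.2, hL.2.2, hL.2.2]

lemma apply_zero_of_fix (hL : IsLorentz L) (he : L unitTime = unitTime) (p : Pt) :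
    L p 0 = p 0 := by
  simpa only [he, mdot_unitTime] using hL.mdot_map p unitTime

lemma sdot_map_of_fix (hL : IsLorentz L) (he : L unitTime = unitTime) (p q : Pt) :
    sdot (L p) (L q) = sdot p q := by
  have := hL.mdot_map p q
  simp only [mdot, hL.apply_zero_of_fix he] at this
  linarith

end IsLorentz

structure IsFutureUnit (x : Pt) : Prop where
  time_pos : 0 < x 0
  sqMink_eq_one : sqMink x = 1

namespace IsFutureUnit

variable {x : Pt}

lemma sdot_self (hx : IsFutureUnit x) : sdot x x = x 0 ^ 2 - 1 := by
  have := hx.sqMink_eq_one; rw [sqMink_eq] at this; linarith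

lemma one_le (hx : IsFutureUnit x) : 1 ≤ x 0 := by
  nlinarith [hx.sdot_self, sdot_self_nonneg x, hx.time_pos]

lemma eq_unitTime (hx : IsFutureUnit x) (h : x 0 = 1) : x = unitTime := by
  have := sdot_self_eq_zero (by rw [hx.sdot_self, h]; norm_num : sdot x x = 0)
  rwa [h, one_smul] at this

end IsFutureUnit

lemma IsLorentz.isFutureUnit_of_orthochronous {τ L : Pt → Pt} (hL : IsLorentz L)
    (hτ : IsTranslation τ) (h : Orthochronous (τ ∘ L)) : IsFutureUnit (L unitTime) := by
  obtain ⟨b, hb⟩ := hτ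
  refine ⟨?_, by rw [hL.2.2, sqMink_unitTime]⟩
  have : L unitTime 0 + b 0 > L 0 0 + b 0 := by simpa [Orthochronous, hb] using h
  simpa [hL.1.map_zero] using this

def parity (x : Pt) : Pt := fun i => if i = 0 then x 0 else -x i

lemma parity_parity (x : Pt) : parity (parity x) = x := by
  funext i; by_cases h : i = 0 <;> simp [parity, h]

lemma IsFutureUnit.parity {x : Pt} (hx : IsFutureUnit x) : IsFutureUnit (parity x) :=
  ⟨hx.time_pos, by rw [← hx.sqMink_eq_one]; simp [sqMink, _root_.parity]⟩

/-- The Lorentz boost taking `e = unitTime` to `x`; with `⟨·, ·⟩ = mdot` it is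
`p ↦ p + 2 ⟨e, p⟩ • x - (⟨x + e, p⟩ / (1 + ⟨x, e⟩)) • (x + e)`. -/
noncomputable def boost (x p : Pt) : Pt :=
  p + (p 0 + sdot x p / (1 + x 0)) • x + (sdot x p / (1 + x 0) - p 0) • unitTime

lemma boost_unitTime (x : Pt) : boost x unitTime = x := by
  funext i; fin_cases i <;> simp [boost, sdot, unitTime]

lemma boost_isLinearMap (x : Pt) : IsLinearMap ℝ (boost x) := by
  constructor
  · intro p q; funext i
    simp only [boost, sdot, Pi.add_apply, Pi.smul_apply, smul_eq_mul]; ring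
  · intro c p; funext i
    simp only [boost, sdot, Pi.add_apply, Pi.smul_apply, smul_eq_mul]; ring

lemma sqMink_boost {x : Pt} (hx : IsFutureUnit x) (p : Pt) : sqMink (boost x p) = sqMink p := by
  have hs := hx.sdot_self
  have h1 : (1 : ℝ) + x 0 ≠ 0 := by linarith [hx.one_le]
  simp only [sdot] at hs
  simp only [sqMink, boost, sdot, unitTime, Pi.add_apply, Pi.smul_apply, smul_eq_mul, Fin.isValue,
    ↓reduceIte, Fin.reduceEq, one_ne_zero, mul_one, mul_zero, add_zero]
  field_simp
  linear_combination (-(p 0 * (1 + x 0) + (x 1 * p 1 + x 2 * p 2 + x 3 * p 3)) ^ 2) * hs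

lemma boost_apply_zero {x : Pt} (hx : 1 + x 0 ≠ 0) (p : Pt) :
    boost x p 0 = x 0 * p 0 + sdot x p := by
  simp only [boost, unitTime, Pi.add_apply, Pi.smul_apply, smul_eq_mul, Fin.isValue, ↓reduceIte,
    mul_one]
  field_simp
  ring

lemma sdot_boost_left (x p : Pt) :
    sdot x (boost x p) = sdot x p + (p 0 + sdot x p / (1 + x 0)) * sdot x x := by
  simp only [boost, sdot, unitTime, Pi.add_apply, Pi.smul_apply, smul_eq_mul, Fin.isValue,
    ↓reduceIte, Fin.reduceEq, one_ne_zero, mul_zero, add_zero]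
  ring

lemma boost_parity_boost {x : Pt} (hx : IsFutureUnit x) (p : Pt) :
    boost (parity x) (boost x p) = p := by
  have h1 : (1 : ℝ) + x 0 ≠ 0 := by linarith [hx.one_le]
  have hk : sdot (parity x) (boost x p) / (1 + parity x 0) =
      -(p 0 * x 0 - p 0 + sdot x p / (1 + x 0) * x 0) := by
    have : sdot (parity x) (boost x p) = - sdot x (boost x p) := by
      simp only [sdot, parity, Fin.isValue, one_ne_zero, ↓reduceIte, Fin.reduceEq]
      ring
    rw [this, sdot_boost_left, hx.sdot_self]
    simp only [parity, if_pos]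
    field_simp; ring
  funext i
  rw [boost, Pi.add_apply, Pi.add_apply, hk, boost_apply_zero h1]
  fin_cases i <;>
    simp only [boost, parity, unitTime, Pi.add_apply, Pi.smul_apply, smul_eq_mul, Fin.isValue,
      Fin.zero_eta, Fin.mk_one, Fin.reduceFinMk, Fin.reduceEq, ↓reduceIte, one_ne_zero, mul_one,
      mul_zero, add_zero, mul_neg, neg_add_rev, neg_sub] <;>
    field_simp <;> ring

lemma boost_boost_parity {x : Pt} (hx : IsFutureUnit x) (p : Pt) :
    boost x (boost (parity x) p) = p := by
  simpa only [parity_parity] using boost_parity_boost hx.parity p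

lemma boost_isLorentz {x : Pt} (hx : IsFutureUnit x) : IsLorentz (boost x) :=
  ⟨boost_isLinearMap x,
    Function.bijective_iff_has_inverse.mpr
      ⟨boost (parity x), boost_parity_boost hx, boost_boost_parity hx⟩,
    sqMink_boost hx⟩

lemma IsLorentz.exists_eq_boost_comp {L : Pt → Pt} (hL : IsLorentz L)
    (hy : IsFutureUnit (L unitTime)) :
    ∃ R, IsLorentz R ∧ R unitTime = unitTime ∧ L = boost (L unitTime) ∘ R :=
  ⟨boost (parity (L unitTime)) ∘ L, (boost_isLorentz hy.parity).comp hL,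
    by simpa [boost_unitTime] using boost_parity_boost hy unitTime,
    funext fun p => (boost_boost_parity hy (L p)).symm⟩

lemma mem_verticalLine_iff {p q : Pt} :
    (p 1 = q 1 ∧ p 2 = q 2 ∧ p 3 = q 3) ↔ ∃ t : ℝ, p = q + t • unitTime := by
  constructor
  · rintro ⟨h1, h2, h3⟩
    refine ⟨p 0 - q 0, funext fun i => ?_⟩
    fin_cases i <;> simp [unitTime, h1, h2, h3]
  · rintro ⟨t, rfl⟩
    simp [unitTime]

lemma image_verticalLine {A : Pt → Pt}
    (hA : ∀ q (t : ℝ), A (q + t • unitTime) = A q + t • unitTime) (q : Pt) :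
    A '' {p | p 1 = q 1 ∧ p 2 = q 2 ∧ p 3 = q 3} =
      {p | p 1 = A q 1 ∧ p 2 = A q 2 ∧ p 3 = A q 3} := by
  ext r
  simp only [Set.mem_image, Set.mem_ofPred_eq, mem_verticalLine_iff]
  constructor
  · rintro ⟨p, ⟨t, rfl⟩, rfl⟩
    exact ⟨t, hA q t⟩
  · rintro ⟨t, rfl⟩
    exact ⟨q + t • unitTime, ⟨t, rfl⟩, hA q t⟩

lemma comp_mem_trivUp {τ L : Pt → Pt} (hτ : IsTranslation τ) (hL : IsLorentz L)
    (he : L unitTime = unitTime) : τ ∘ L ∈ TrivUp := by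
  obtain ⟨b, hb⟩ := hτ
  have hA : ∀ q (t : ℝ), (τ ∘ L) (q + t • unitTime) = (τ ∘ L) q + t • unitTime := by
    intro q t
    simp only [Function.comp_apply, hb, hL.1.map_add, hL.1.map_smul, he]
    abel
  refine ⟨⟨⟨τ, L, ⟨b, hb⟩, hL.1, hL.2.1, fun p => ?_, rfl⟩, ?_⟩, ?_⟩
  · rw [sqEucl_eq, sqEucl_eq, hL.apply_zero_of_fix he, hL.sdot_map_of_fix he]
  · rintro ℓ ⟨q, rfl⟩
    exact ⟨_, image_verticalLine hA q⟩
  · simp [Orthochronous, hb, he, hL.1.map_zero, unitTime]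

lemma translation_mem_trivUp {τ : Pt → Pt} (hτ : IsTranslation τ) : τ ∈ TrivUp :=
  comp_mem_trivUp (L := id) hτ ⟨LinearMap.id.isLinear, Function.bijective_id, fun _ => rfl⟩ rfl

lemma mem_trivUp_of_fix {K : Pt → Pt} (hK : IsLorentz K) (he : K unitTime = unitTime) :
    K ∈ TrivUp :=
  comp_mem_trivUp (τ := id) ⟨0, fun p => (add_zero p).symm⟩ hK he

lemma IsLorentz.comp_boost_of_fix {K : Pt → Pt} (hK : IsLorentz K) (he : K unitTime = unitTime)
    (x : Pt) : K ∘ boost x = boost (K x) ∘ K := by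
  funext p
  simp only [Function.comp_apply, boost, hK.1.map_add, hK.1.map_smul, he,
    hK.apply_zero_of_fix he, hK.sdot_map_of_fix he]

noncomputable def reflect (u p : Pt) : Pt := p - (2 * sdot u p / sdot u u) • u

lemma reflect_reflect {u : Pt} (hu : sdot u u ≠ 0) (p : Pt) : reflect u (reflect u p) = p := by
  replace hu : u 1 ^ 2 + u 2 ^ 2 + u 3 ^ 2 ≠ 0 := by simpa only [sdot, ← sq] using hu
  funext i
  simp only [reflect, sdot, Pi.sub_apply, Pi.smul_apply, smul_eq_mul]
  field_simp
  ring

lemma reflect_isLorentz {u : Pt} (hu0 : u 0 = 0) (hu : sdot u u ≠ 0) : IsLorentz (reflect u) := by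
  refine ⟨⟨fun p q => ?_, fun c p => ?_⟩,
    Function.Involutive.bijective (reflect_reflect hu), fun p => ?_⟩
  · funext i; simp only [reflect, sdot, Pi.add_apply, Pi.sub_apply, Pi.smul_apply, smul_eq_mul]
    ring
  · funext i; simp only [reflect, sdot, Pi.sub_apply, Pi.smul_apply, smul_eq_mul]
    ring
  · replace hu : u 1 ^ 2 + u 2 ^ 2 + u 3 ^ 2 ≠ 0 := by simpa only [sdot, ← sq] using hu
    simp only [sqMink, reflect, sdot, Pi.sub_apply, Pi.smul_apply, smul_eq_mul, hu0]
    field_simp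
    ring

lemma reflect_unitTime (u : Pt) : reflect u unitTime = unitTime := by
  simp [reflect, sdot_unitTime]

lemma exists_isLorentz_fix_apply_eq {x y : Pt} (h0 : y 0 = x 0) (hs : sdot y y = sdot x x) :
    ∃ K, IsLorentz K ∧ K unitTime = unitTime ∧ K x = y := by
  set u := x - y with hu
  have hu0 : u 0 = 0 := by simp [hu, h0]
  by_cases huu : sdot u u = 0
  · have : x = y := sub_eq_zero.mp (by simpa [hu0] using sdot_self_eq_zero huu)
    exact ⟨id, ⟨LinearMap.id.isLinear, Function.bijective_id, fun _ => rfl⟩, rfl, this⟩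
  refine ⟨reflect u, reflect_isLorentz hu0 huu, reflect_unitTime u, ?_⟩
  have hcoef : 2 * sdot u x / sdot u u = 1 := by
    rw [div_eq_one_iff_eq huu]
    simp only [sdot, hu, Pi.sub_apply] at hs ⊢
    linarith
  rw [reflect, hcoef, one_smul, hu, sub_sub_cancel]

lemma exists_isFutureUnit_apply_zero_eq {c : ℝ} (hc : 1 ≤ c) :
    ∃ x, IsFutureUnit x ∧ x 0 = c := by
  refine ⟨![c, √(c ^ 2 - 1), 0, 0], ⟨(by linarith : (0 : ℝ) < c), ?_⟩, rfl⟩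
  simp [sqMink, Real.sq_sqrt (by nlinarith : (0 : ℝ) ≤ c ^ 2 - 1)]

/-- `x 0 * y 0 + sdot x y = boost x y 0` is the Lorentz factor of `boost x ∘ boost y`. -/
lemma exists_isFutureUnit_pair {γ c : ℝ} (hγ : 1 ≤ γ) (hc1 : 1 ≤ c) (hc2 : c ≤ 2 * γ ^ 2 - 1) :
    ∃ x y, IsFutureUnit x ∧ IsFutureUnit y ∧ x 0 = γ ∧ y 0 = γ ∧ x 0 * y 0 + sdot x y = c := by
  set r := √(γ ^ 2 - 1)
  have hr : r ^ 2 = γ ^ 2 - 1 := Real.sq_sqrt (by nlinarith)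
  set s := (c - γ ^ 2) / r
  have hrs : r * s = c - γ ^ 2 := by
    rcases eq_or_ne r 0 with h | h
    · have : γ ^ 2 = 1 := by nlinarith
      simp only [s, h]; nlinarith
    · simp only [s]; field_simp
  have hsr : s ^ 2 ≤ r ^ 2 := by
    have : (r * s) ^ 2 ≤ (r ^ 2) ^ 2 := by
      rw [hrs, hr]; exact sq_le_sq' (by linarith) (by linarith)
    rcases eq_or_ne r 0 with h | h
    · simp [s, h]
    · have : 0 < r ^ 2 := by positivity
      nlinarith
  set t := √(r ^ 2 - s ^ 2)
  have ht : t ^ 2 = r ^ 2 - s ^ 2 := Real.sq_sqrt (by linarith)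
  have hγ0 : (0 : ℝ) < γ := by linarith
  refine ⟨![γ, r, 0, 0], ![γ, s, t, 0], ⟨hγ0, ?_⟩, ⟨hγ0, ?_⟩, rfl, rfl, ?_⟩
  · simp [sqMink, hr]
  · simp [sqMink, ht, hr]
  · show γ * γ + (r * s + 0 * t + 0 * 0) = c
    linear_combination hrs

namespace IsCompGroup

variable {G : Set (Pt → Pt)} {f g : Pt → Pt}

lemma comp_mem (hG : IsCompGroup G) (hf : f ∈ G) (hg : g ∈ G) : f ∘ g ∈ G :=
  hG.2.1 f hf g hg

lemma mem_of_comp_mem_left (hG : IsCompGroup G) (hf : f ∈ G) (hfg : f ∘ g ∈ G) : g ∈ G := by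
  obtain ⟨f', hf', -, hf'f⟩ := hG.2.2 f hf
  simpa [← Function.comp_assoc, hf'f] using hG.comp_mem hf' hfg

lemma mem_of_comp_mem_right (hG : IsCompGroup G) (hg : g ∈ G) (hfg : f ∘ g ∈ G) : f ∈ G := by
  obtain ⟨g', hg', hgg', -⟩ := hG.2.2 g hg
  simpa [Function.comp_assoc, hgg'] using hG.comp_mem hfg hg'

end IsCompGroup

section GroupContainingTrivUp

variable {G : Set (Pt → Pt)}

lemma boost_mem_of_isLorentz_mem (hG : IsCompGroup G) (hTG : TrivUp ⊆ G) {L : Pt → Pt}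
    (hL : IsLorentz L) (hy : IsFutureUnit (L unitTime)) (hLG : L ∈ G) :
    boost (L unitTime) ∈ G := by
  obtain ⟨R, hR, hRe, hLR⟩ := hL.exists_eq_boost_comp hy
  exact hG.mem_of_comp_mem_right (hTG (mem_trivUp_of_fix hR hRe)) (hLR ▸ hLG)

lemma boost_mem_of_sdot_self_eq (hG : IsCompGroup G) (hTG : TrivUp ⊆ G) {x y : Pt}
    (hxG : boost x ∈ G) (h0 : y 0 = x 0) (hs : sdot y y = sdot x x) : boost y ∈ G := by
  obtain ⟨K, hK, hKe, rfl⟩ := exists_isLorentz_fix_apply_eq h0 hs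
  have hKG : K ∈ G := hTG (mem_trivUp_of_fix hK hKe)
  exact hG.mem_of_comp_mem_right hKG (hK.comp_boost_of_fix hKe x ▸ hG.comp_mem hKG hxG)

lemma boost_mem_of_le_two_sq_sub_one (hG : IsCompGroup G) (hTG : TrivUp ⊆ G) {x y : Pt}
    (hx : IsFutureUnit x) (hxG : boost x ∈ G) (hy : IsFutureUnit y)
    (hle : y 0 ≤ 2 * x 0 ^ 2 - 1) : boost y ∈ G := by
  obtain ⟨x₁, x₂, hx₁, hx₂, h₁, h₂, hc⟩ := exists_isFutureUnit_pair hx.one_le hy.one_le hle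
  have hmem : ∀ z, IsFutureUnit z → z 0 = x 0 → boost z ∈ G := fun z hz h =>
    boost_mem_of_sdot_self_eq hG hTG hxG h (by rw [hz.sdot_self, hx.sdot_self, h])
  have hM : IsLorentz (boost x₁ ∘ boost x₂) := (boost_isLorentz hx₁).comp (boost_isLorentz hx₂)
  have hMe : (boost x₁ ∘ boost x₂) unitTime 0 = y 0 := by
    rw [Function.comp_apply, boost_unitTime, boost_apply_zero (by linarith [hx₁.one_le]), hc]
  have hfu : IsFutureUnit ((boost x₁ ∘ boost x₂) unitTime) :=
    ⟨by linarith [hy.time_pos], by rw [hM.2.2, sqMink_unitTime]⟩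
  refine boost_mem_of_sdot_self_eq hG hTG
    (boost_mem_of_isLorentz_mem hG hTG hM hfu
      (hG.comp_mem (hmem x₁ hx₁ h₁) (hmem x₂ hx₂ h₂))) hMe.symm ?_
  rw [hy.sdot_self, hfu.sdot_self, hMe]

lemma boost_mem_of_one_lt (hG : IsCompGroup G) (hTG : TrivUp ⊆ G) {x : Pt} (hx : IsFutureUnit x)
    (hx1 : 1 < x 0) (hxG : boost x ∈ G) {y : Pt} (hy : IsFutureUnit y) : boost y ∈ G := by
  set δ := x 0 - 1
  have grow : ∀ n : ℕ, ∃ z, IsFutureUnit z ∧ z 0 = x 0 + n * δ ∧ boost z ∈ G := by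
    intro n
    induction n with
    | zero => exact ⟨x, hx, by simp, hxG⟩
    | succ n ih =>
      obtain ⟨z, hz, hz0, hzG⟩ := ih
      obtain ⟨w, hw, hw0⟩ := exists_isFutureUnit_apply_zero_eq (c := x 0 + (n + 1) * δ)
        (by nlinarith)
      refine ⟨w, hw, by rw [hw0]; push_cast; ring,
        boost_mem_of_le_two_sq_sub_one hG hTG hz hzG hw ?_⟩
      have : x 0 ≤ z 0 := by rw [hz0]; nlinarith
      nlinarith
  obtain ⟨n, hn⟩ := exists_nat_gt ((y 0 - x 0) / δ)
  obtain ⟨z, hz, hz0, hzG⟩ := grow n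
  refine boost_mem_of_le_two_sq_sub_one hG hTG hz hzG hy ?_
  have : y 0 ≤ z 0 := by
    rw [div_lt_iff₀ (by linarith : (0 : ℝ) < δ)] at hn
    linarith
  nlinarith [hz.one_le]

lemma poiUp_subset_of_boost_mem (hG : IsCompGroup G) (hTG : TrivUp ⊆ G)
    (hboost : ∀ y, IsFutureUnit y → boost y ∈ G) : PoiUp ⊆ G := by
  rintro _ ⟨⟨τ, L, hτ, hL, rfl⟩, horth⟩
  have hy := hL.isFutureUnit_of_orthochronous hτ horth
  obtain ⟨R, hR, hRe, hLR⟩ := hL.exists_eq_boost_comp hy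
  rw [hLR]
  exact hG.comp_mem (hTG (translation_mem_trivUp hτ))
    (hG.comp_mem (hboost _ hy) (hTG (mem_trivUp_of_fix hR hRe)))

end GroupContainingTrivUp

/-- **Corollary of Borisov's theorem.** There is no group (under composition) of
functions from ℝ⁴ to ℝ⁴ lying strictly between Triv↑ and Poi↑. -/
theorem no_group_between_trivUp_poiUp :
    ¬ ∃ G : Set (Pt → Pt), IsCompGroup G ∧ TrivUp ⊂ G ∧ G ⊂ PoiUp := by
  rintro ⟨G, hG, hTG, hGP⟩
  obtain ⟨_, hPG, hPT⟩ := Set.exists_of_ssubset hTG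
  obtain ⟨⟨τ, L, hτ, hL, rfl⟩, horth⟩ := hGP.subset hPG
  have hy := hL.isFutureUnit_of_orthochronous hτ horth
  have hLG : L ∈ G := hG.mem_of_comp_mem_left (hTG.subset (translation_mem_trivUp hτ)) hPG
  have hy1 : 1 < L unitTime 0 :=
    hy.one_le.lt_of_ne fun h => hPT (comp_mem_trivUp hτ hL (hy.eq_unitTime h.symm))
  have hboost : ∀ z, IsFutureUnit z → boost z ∈ G := fun _ hz =>
    boost_mem_of_one_lt hG hTG.subset hy hy1 (boost_mem_of_isLorentz_mem hG hTG.subset hL hy hLG) hz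
  exact hGP.not_subset (poiUp_subset_of_boost_mem hG hTG.subset hboost)
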